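/- Let ξ be a Reeb field and v ∈ X_0. Then T(v;ξ) = sup_{φ ∈ psh(ξ)} ( sup_{X_0} φ − φ(v) ), as an equality in [0,+∞]. -/
import Mathlib


open Filter Topology
open scoped Classical

noncomputable section

/-- A (real) semivaluation on `R` trivial on `k`, encoded as a function `R → ℝ ∪ {+∞} ⊆ EReal`. -/
def IsSemival (k : Type*) {R : Type*} [Field k] [CommRing R] [Algebra k R]
    (v : R → EReal) : Prop :=
  (∀ f, v f ≠ ⊥) ∧ (∀ f g, v (f * g) = v f + v g) ∧
    (∀ f g, min (v f) (v g) ≤ v (f + g)) ∧ v 0 = ⊤ ∧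
    ∀ c : k, c ≠ 0 → v (algebraMap k R c) = 0

/-- The pairing `⟨ξ, α⟩` between `ξ ∈ N_ℝ` and a weight `α ∈ M`. -/
def pairing {r : ℕ} (ξ : Fin r → ℝ) (α : Fin r → ℤ) : ℝ := ∑ i, ξ i * (α i : ℝ)

variable {k : Type*} [Field k] [IsAlgClosed k] [CharZero k]
variable {R : Type*} [CommRing R] [IsDomain R] [IsIntegrallyClosed R] [Algebra k R]
  [Algebra.FiniteType k R]
variable {r : ℕ} (𝒜 : (Fin r → ℤ) → Submodule k R) [GradedAlgebra 𝒜]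

/-- `ξ` is a Reeb field: `⟨ξ,α⟩ > 0` for all `α ∈ Λ ∖ {0}`. -/
def IsReeb (ξ : Fin r → ℝ) : Prop :=
  ∀ α : Fin r → ℤ, α ≠ 0 → 𝒜 α ≠ ⊥ → 0 < pairing ξ α

/-- The maximal ideal `𝔪` of the cone point. -/
def mIdeal : Ideal R := Ideal.span {f : R | ∃ α, α ≠ 0 ∧ f ∈ 𝒜 α}

/-- The semivaluation of the cone point `o`: `+∞` on `𝔪`, `0` elsewhere. -/
def oFun : R → EReal := fun f => if f ∈ mIdeal 𝒜 then (⊤ : EReal) else 0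

/-- The punctured Berkovich cone `X^an ∖ {o}`. -/
def XanP : Set (R → EReal) := {v | IsSemival k v ∧ v ≠ oFun 𝒜}

/-- The term `(log|f| + λ)/⟨ξ,α⟩` evaluated at `v`; recall `log|f|(v) = -v(f)`. -/
def fsTerm (ξ : Fin r → ℝ) (α : Fin r → ℤ) (f : R) (lam : ℝ) (v : R → EReal) : EReal :=
  (((pairing ξ α)⁻¹ : ℝ) : EReal) * (-(v f) + (lam : EReal))

/-- Fubini–Study functions with polarization `ξ`. -/
def IsFS (ξ : Fin r → ℝ) (φ : XanP 𝒜 → ℝ) : Prop :=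
  ∃ (N : ℕ) (f : Fin N → R) (α : Fin N → Fin r → ℤ) (lam : Fin N → ℝ),
    (∀ j, α j ≠ 0 ∧ f j ∈ 𝒜 (α j) ∧ f j ≠ 0) ∧
    (Ideal.span (Set.range f)).radical = mIdeal 𝒜 ∧
    ∀ v : XanP 𝒜, (φ v : EReal) = ⨆ j, fsTerm ξ (α j) (f j) (lam j) v.1

/-- Continuous `ξ`-psh functions: the closure of `H(ξ)` in `C⁰(X^an∖{o})` with the
topology of uniform convergence on compact subsets (compact-open topology). -/
def cpsh (ξ : Fin r → ℝ) : Set C(↥(XanP 𝒜), ℝ) := closure {φ | IsFS 𝒜 ξ ⇑φ}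

/-- `ξ`-psh functions: pointwise limits of decreasing nets of continuous `ξ`-psh
functions, not identically `-∞`, with values in `ℝ ∪ {-∞}`. -/
def IsPsh (ξ : Fin r → ℝ) (φ : XanP 𝒜 → EReal) : Prop :=
  (∀ v, φ v ≠ ⊤) ∧ (∃ v, φ v ≠ ⊥) ∧
  ∃ (ι : Type) (le : ι → ι → Prop),
    Nonempty ι ∧ (∀ i j : ι, ∃ l, le i l ∧ le j l) ∧
    ∃ φi : ι → C(↥(XanP 𝒜), ℝ),
      (∀ i, φi i ∈ cpsh 𝒜 ξ) ∧
      (∀ i j, le i j → ∀ v, φi j v ≤ φi i v) ∧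
      ∀ v, (⨅ i, ((φi i v : ℝ) : EReal)) = φ v

/-- The NA link `X₀ = {v : v(𝔪) = 0}`, as a subset of the punctured cone. -/
def linkSet : Set (↥(XanP 𝒜)) :=
  {v | (∀ f ∈ mIdeal 𝒜, f ≠ 0 → 0 ≤ v.1 f) ∧
    sInf {x : EReal | ∃ f ∈ mIdeal 𝒜, f ≠ 0 ∧ x = v.1 f} = 0}

/-- `T(v;ξ) = sup { v(f)/⟨ξ,α⟩ : α ∈ Λ∖{0}, f ∈ R_α ∖ {0} }`. -/
def Tfun (v : R → EReal) (ξ : Fin r → ℝ) : EReal :=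
  sSup {x : EReal | ∃ (α : Fin r → ℤ) (f : R), α ≠ 0 ∧ f ∈ 𝒜 α ∧ f ≠ 0 ∧
    x = (((pairing ξ α)⁻¹ : ℝ) : EReal) * v f}

end

/-! ### Auxiliary material for the proof -/

noncomputable section Aux

open DirectSum

/-! #### Generic `EReal` and order helpers -/

private lemma my_add_eq_top {a b : EReal} (ha : a ≠ ⊤) (hb : b ≠ ⊤) : a + b ≠ ⊤ :=
  (EReal.add_lt_top ha hb).ne

private lemma my_div_ne_bot {x : EReal} {c : ℝ} (hc : 0 < c) (hx : x ≠ ⊥) :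
    x / (c : EReal) ≠ ⊥ := by
  induction x with
  | bot => exact absurd rfl hx
  | coe a => rw [← EReal.coe_div]; exact EReal.coe_ne_bot _
  | top =>
      rw [EReal.top_div_of_pos_ne_top (by exact_mod_cast hc) (EReal.coe_ne_top c)]
      exact top_ne_bot

private lemma my_div_ne_top {x : EReal} {c : ℝ} (hc : 0 < c) (hx : x ≠ ⊤) :
    x / (c : EReal) ≠ ⊤ := by
  induction x with
  | bot =>
      rw [EReal.bot_div_of_pos_ne_top (by exact_mod_cast hc) (EReal.coe_ne_top c)]
      exact bot_ne_top
  | coe a => rw [← EReal.coe_div]; exact EReal.coe_ne_top _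
  | top => exact absurd rfl hx

private lemma my_iInf_sup_le {α : Type*} [CompleteLinearOrder α] {ι : Sort*}
    (a : α) (b : ι → α) : (⨅ i, (a ⊔ b i)) ≤ a ⊔ ⨅ i, b i := by
  by_contra h
  push_neg at h
  have ha : a < ⨅ i, (a ⊔ b i) := lt_of_le_of_lt le_sup_left h
  have hb : (⨅ i, b i) < ⨅ i, (a ⊔ b i) := lt_of_le_of_lt le_sup_right h
  obtain ⟨i, hi⟩ := iInf_lt_iff.1 hb
  exact absurd (iInf_le (fun i => a ⊔ b i) i) (not_le.2 (sup_lt_iff.2 ⟨ha, hi⟩))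

private lemma my_fin_iSup_succ {α : Type*} [CompleteLattice α] {n : ℕ} (u : Fin (n + 1) → α) :
    (⨆ j, u j) = u 0 ⊔ ⨆ i : Fin n, u i.succ := by
  refine le_antisymm (iSup_le fun j => ?_) (sup_le (le_iSup u 0) (iSup_le fun i => le_iSup u i.succ))
  induction j using Fin.cases with
  | zero => exact le_sup_left
  | succ i => exact le_sup_of_le_right (le_iSup (fun i => u i.succ) i)

private lemma my_fin_iSup_ne_top {n : ℕ} {u : Fin n → EReal} (h : ∀ j, u j ≠ ⊤) :
    (⨆ j, u j) ≠ ⊤ := by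
  cases n with
  | zero => rw [iSup_of_empty]; exact bot_ne_top
  | succ m =>
      have hne : (Finset.univ : Finset (Fin (m + 1))).Nonempty := Finset.univ_nonempty
      set M : ℝ := Finset.univ.sup' hne (fun j => (u j).toReal) with hM
      have hle : (⨆ j, u j) ≤ (M : EReal) := by
        refine iSup_le fun j => le_trans (EReal.le_coe_toReal (h j)) ?_
        exact_mod_cast Finset.le_sup' (fun j => (u j).toReal) (Finset.mem_univ j)
      exact fun htop => (EReal.coe_ne_top M) (top_le_iff.1 (htop ▸ hle))

private lemma my_iInf_add_le {ι : Sort*} (b : ι → EReal) (t : ℝ) :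
    (⨅ i, (b i + (t : EReal))) ≤ (⨅ i, b i) + (t : EReal) := by
  rw [← EReal.sub_le_iff_le_add (Or.inl (EReal.coe_ne_bot t)) (Or.inl (EReal.coe_ne_top t))]
  refine le_iInf fun i => ?_
  calc (⨅ i, (b i + (t : EReal))) - (t : EReal)
      ≤ (b i + (t : EReal)) - (t : EReal) := EReal.sub_le_sub (iInf_le _ i) le_rfl
    _ = b i := EReal.add_sub_cancel_right

private lemma my_continuous_const_mul {X : Type*} [TopologicalSpace X] {g : X → EReal}
    (hg : Continuous g) {d : ℝ} (hd : d ≠ 0) : Continuous fun x => (d : EReal) * g x := by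
  rw [continuous_iff_continuousAt]
  intro x
  have hd' : (d : EReal) ≠ 0 := by exact_mod_cast hd
  have h1 : ContinuousAt (fun x => (((d : EReal), g x) : EReal × EReal)) x :=
    (continuous_const.prodMk hg).continuousAt
  have h2 := EReal.continuousAt_mul (p := ((d : EReal), g x)) (Or.inl hd') (Or.inl hd')
    (Or.inl (EReal.coe_ne_bot d)) (Or.inl (EReal.coe_ne_top d))
  exact ContinuousAt.comp (f := fun x => (((d : EReal), g x) : EReal × EReal)) h2 h1

private lemma my_continuous_add_const {X : Type*} [TopologicalSpace X] {g : X → EReal}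
    (hg : Continuous g) (t : ℝ) : Continuous fun x => g x + (t : EReal) := by
  rw [continuous_iff_continuousAt]
  intro x
  have h1 : ContinuousAt (fun x => ((g x, (t : EReal)) : EReal × EReal)) x :=
    (hg.prodMk continuous_const).continuousAt
  have h2 := EReal.continuousAt_add (p := (g x, (t : EReal))) (Or.inr (EReal.coe_ne_bot t))
    (Or.inr (EReal.coe_ne_top t))
  exact ContinuousAt.comp (f := fun x => ((g x, (t : EReal)) : EReal × EReal)) h2 h1

private lemma my_cont_fin_iSup {X : Type*} [TopologicalSpace X] :
    ∀ {n : ℕ} {u : Fin n → X → EReal}, (∀ j, Continuous (u j)) →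
      Continuous fun x => ⨆ j, u j x := by
  intro n
  induction n with
  | zero =>
      intro u hu
      simp only [iSup_of_empty]
      exact continuous_const
  | succ m ih =>
      intro u hu
      have : (fun x => ⨆ j, u j x) = fun x => u 0 x ⊔ ⨆ i : Fin m, u i.succ x :=
        funext fun x => my_fin_iSup_succ fun j => u j x
      rw [this]
      exact (hu 0).sup (ih fun i => hu i.succ)

section MainAux

variable {k : Type*} [Field k] [IsAlgClosed k] [CharZero k]
variable {R : Type*} [CommRing R] [IsDomain R] [IsIntegrallyClosed R] [Algebra k R]
  [Algebra.FiniteType k R]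
variable {r : ℕ} (𝒜 : (Fin r → ℤ) → Submodule k R) [GradedAlgebra 𝒜]

/-! #### pairing -/

private lemma pairing_zero (ξ : Fin r → ℝ) : pairing ξ (0 : Fin r → ℤ) = 0 := by
  simp [pairing]

private lemma pairing_add (ξ : Fin r → ℝ) (α β : Fin r → ℤ) :
    pairing ξ (α + β) = pairing ξ α + pairing ξ β := by
  simp [pairing, mul_add, Finset.sum_add_distrib]

private lemma fsTerm_eq {ξ : Fin r → ℝ} (α : Fin r → ℤ) (f : R) (lam : ℝ) (v : R → EReal) :
    fsTerm ξ α f lam v = (-(v f) + (lam : EReal)) / ((pairing ξ α : ℝ) : EReal) := by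
  simp only [fsTerm]
  rw [EReal.div_eq_inv_mul, ← EReal.coe_inv]

/-! #### homogeneous components -/

private lemma mem_ne_bot {α : Fin r → ℤ} {f : R} (hf : f ∈ 𝒜 α) (hf0 : f ≠ 0) : 𝒜 α ≠ ⊥ :=
  fun hb => hf0 ((Submodule.mem_bot k).1 (hb ▸ hf))

private lemma pairing_pos {ξ : Fin r → ℝ} (hξ : IsReeb 𝒜 ξ) {α : Fin r → ℤ} (hα : α ≠ 0)
    {f : R} (hf : f ∈ 𝒜 α) (hf0 : f ≠ 0) : 0 < pairing ξ α :=
  hξ α hα (mem_ne_bot 𝒜 hf hf0)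

private lemma comp_pairing_nonneg {ξ : Fin r → ℝ} (hξ : IsReeb 𝒜 ξ) (x : R) (γ : Fin r → ℤ)
    (h : ((DirectSum.decompose 𝒜 x γ : 𝒜 γ) : R) ≠ 0) : 0 ≤ pairing ξ γ := by
  by_cases hγ : γ = 0
  · rw [hγ, pairing_zero]
  · exact le_of_lt (pairing_pos 𝒜 hξ hγ (DirectSum.decompose 𝒜 x γ).2 h)

private lemma comp_pairing_pos {ξ : Fin r → ℝ} (hξ : IsReeb 𝒜 ξ) (x : R) {γ : Fin r → ℤ}
    (hγ : γ ≠ 0) (h : ((DirectSum.decompose 𝒜 x γ : 𝒜 γ) : R) ≠ 0) : 0 < pairing ξ γ :=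
  pairing_pos 𝒜 hξ hγ (DirectSum.decompose 𝒜 x γ).2 h

private lemma proj_zero_of_mem {ξ : Fin r → ℝ} (hξ : IsReeb 𝒜 ξ) {x : R}
    (hx : x ∈ mIdeal 𝒜) : ∀ β, pairing ξ β ≤ 0 → ((DirectSum.decompose 𝒜 x β : 𝒜 β) : R) = 0 := by
  refine Submodule.span_induction ?_ ?_ ?_ ?_ hx
  · rintro f ⟨α, hα, hf⟩ β hβ
    by_cases hf0 : f = 0
    · rw [hf0, DirectSum.decompose_zero]
      rfl
    · have hne : α ≠ β := fun h => absurd (h ▸ pairing_pos 𝒜 hξ hα hf hf0) (not_lt.2 hβ)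
      exact DirectSum.decompose_of_mem_ne 𝒜 hf hne
  · intro β _
    rw [DirectSum.decompose_zero]
    rfl
  · intro x y _ _ hx hy β hβ
    rw [DirectSum.decompose_add, DirectSum.add_apply, AddMemClass.coe_add, hx β hβ, hy β hβ,
      add_zero]
  · intro a x _ hx β hβ
    rw [smul_eq_mul, DirectSum.decompose_mul, DirectSum.coe_mul_apply]
    refine Finset.sum_eq_zero fun ij hij => ?_
    rw [Finset.mem_filter, Finset.mem_product] at hij
    obtain ⟨⟨hij1, hij2⟩, hijsum⟩ := hij
    by_cases h2 : pairing ξ ij.2 ≤ 0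
    · rw [hx ij.2 h2, mul_zero]
    · by_cases h1 : ((DirectSum.decompose 𝒜 a ij.1 : 𝒜 ij.1) : R) = 0
      · rw [h1, zero_mul]
      · exfalso
        have hp1 : 0 ≤ pairing ξ ij.1 := comp_pairing_nonneg 𝒜 hξ a ij.1 h1
        have : 0 < pairing ξ β := by
          rw [← hijsum, pairing_add]
          linarith [not_le.1 h2]
        linarith

private lemma mem_mIdeal_of_proj_zero {x : R}
    (hx : ((DirectSum.decompose 𝒜 x 0 : 𝒜 0) : R) = 0) : x ∈ mIdeal 𝒜 := by
  have hrep : x = ∑ i ∈ (DirectSum.decompose 𝒜 x).support,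
      ((DirectSum.decompose 𝒜 x i : 𝒜 i) : R) := (DirectSum.sum_support_decompose 𝒜 x).symm
  rw [hrep]
  refine Ideal.sum_mem _ fun i hi => ?_
  have hi0 : i ≠ 0 := by
    rintro rfl
    rw [DFinsupp.mem_support_iff] at hi
    exact hi (by ext; exact hx)
  exact Ideal.subset_span ⟨i, hi0, (DirectSum.decompose 𝒜 x i).2⟩

private lemma one_notMem_mIdeal {ξ : Fin r → ℝ} (hξ : IsReeb 𝒜 ξ) : (1 : R) ∉ mIdeal 𝒜 := by
  intro h
  have := proj_zero_of_mem 𝒜 hξ h 0 (le_of_eq (pairing_zero ξ))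
  rw [DirectSum.decompose_of_mem_same 𝒜 SetLike.GradedOne.one_mem] at this
  exact one_ne_zero this

private lemma mIdeal_isPrime {ξ : Fin r → ℝ} (hξ : IsReeb 𝒜 ξ) : (mIdeal 𝒜).IsPrime := by
  constructor
  · intro h
    exact one_notMem_mIdeal 𝒜 hξ (h ▸ Submodule.mem_top)
  · intro x y hxy
    by_contra h
    push_neg at h
    obtain ⟨hx, hy⟩ := h
    have hx0 : ((DirectSum.decompose 𝒜 x 0 : 𝒜 0) : R) ≠ 0 :=
      fun h => hx (mem_mIdeal_of_proj_zero 𝒜 h)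
    have hy0 : ((DirectSum.decompose 𝒜 y 0 : 𝒜 0) : R) ≠ 0 :=
      fun h => hy (mem_mIdeal_of_proj_zero 𝒜 h)
    have hkey : ((DirectSum.decompose 𝒜 (x * y) 0 : 𝒜 0) : R) =
        ((DirectSum.decompose 𝒜 x 0 : 𝒜 0) : R) * ((DirectSum.decompose 𝒜 y 0 : 𝒜 0) : R) := by
      rw [DirectSum.decompose_mul, DirectSum.coe_mul_apply]
      refine Finset.sum_eq_single_of_mem ((0 : Fin r → ℤ), (0 : Fin r → ℤ)) ?_ ?_
      · rw [Finset.mem_filter, Finset.mem_product]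
        exact ⟨⟨DFinsupp.mem_support_iff.2 fun h => hx0 (by rw [h]; rfl),
          DFinsupp.mem_support_iff.2 fun h => hy0 (by rw [h]; rfl)⟩, add_zero 0⟩
      · rintro ⟨γ, δ⟩ hmem hne
        rw [Finset.mem_filter, Finset.mem_product] at hmem
        obtain ⟨⟨h1, h2⟩, hsum⟩ := hmem
        by_cases hcx : ((DirectSum.decompose 𝒜 x γ : 𝒜 γ) : R) = 0
        · rw [hcx, zero_mul]
        by_cases hcy : ((DirectSum.decompose 𝒜 y δ : 𝒜 δ) : R) = 0
        · rw [hcy, mul_zero]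
        exfalso
        have hγ : 0 ≤ pairing ξ γ := comp_pairing_nonneg 𝒜 hξ x γ hcx
        have hδ : 0 ≤ pairing ξ δ := comp_pairing_nonneg 𝒜 hξ y δ hcy
        have hγδ : pairing ξ γ + pairing ξ δ = 0 := by
          rw [← pairing_add, hsum, pairing_zero]
        have hγ0 : γ = 0 := by
          by_contra hγ0
          have := comp_pairing_pos 𝒜 hξ x hγ0 hcx
          linarith
        have hδ0 : δ = 0 := by
          by_contra hδ0
          have := comp_pairing_pos 𝒜 hξ y hδ0 hcy
          linarith
        exact hne (by rw [hγ0, hδ0])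
    have := proj_zero_of_mem 𝒜 hξ hxy 0 (le_of_eq (pairing_zero ξ))
    rw [hkey] at this
    exact mul_ne_zero hx0 hy0 this

/-! #### degenerate case: there is some nonzero homogeneous element of nonzero degree -/

private lemma oFun_of_mem {x : R} (hx : x ∈ mIdeal 𝒜) : oFun 𝒜 x = ⊤ := by
  simp only [oFun]
  exact if_pos hx

private lemma oFun_of_notMem {x : R} (hx : x ∉ mIdeal 𝒜) : oFun 𝒜 x = 0 := by
  simp only [oFun]
  exact if_neg hx


private lemma exists_homog (h0 : 𝒜 0 = Submodule.span k {(1 : R)}) (v : ↥(XanP 𝒜)) :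
    ∃ (α : Fin r → ℤ) (f : R), α ≠ 0 ∧ f ∈ 𝒜 α ∧ f ≠ 0 := by
  by_contra h
  push_neg at h
  have hall : ∀ x : R, ∃ c : k, x = algebraMap k R c := by
    intro x
    have hx0 : x = ((DirectSum.decompose 𝒜 x 0 : 𝒜 0) : R) := by
      conv_lhs => rw [← DirectSum.sum_support_decompose 𝒜 x]
      refine Finset.sum_eq_single 0 (fun b _ hb => ?_) (fun h0' => ?_)
      · by_contra hne
        exact hne (h b _ hb (DirectSum.decompose 𝒜 x b).2)
      · rw [DFinsupp.notMem_support_iff.1 h0']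
        rfl
    have hm : ((DirectSum.decompose 𝒜 x 0 : 𝒜 0) : R) ∈ Submodule.span k {(1 : R)} := by
      rw [← h0]; exact (DirectSum.decompose 𝒜 x 0).2
    obtain ⟨c, hc⟩ := Submodule.mem_span_singleton.1 hm
    exact ⟨c, by rw [hx0, ← hc, Algebra.algebraMap_eq_smul_one]⟩
  have hmbot : mIdeal 𝒜 = ⊥ := by
    refine le_bot_iff.1 (Ideal.span_le.2 ?_)
    rintro f ⟨α, hα, hf⟩
    simpa using h α f hα hf
  apply v.2.2
  funext x
  obtain ⟨c, rfl⟩ := hall x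
  by_cases hc : c = 0
  · subst hc
    rw [map_zero]
    have h1 : v.1 0 = ⊤ := v.2.1.2.2.2.1
    have h2 : oFun 𝒜 0 = ⊤ := oFun_of_mem 𝒜 (Ideal.zero_mem _)
    rw [h1, h2]
  · have h1 : v.1 (algebraMap k R c) = 0 := v.2.1.2.2.2.2 c hc
    have hne : algebraMap k R c ≠ 0 := fun h => hc ((algebraMap k R).injective (by rw [h, map_zero]))
    have h2 : oFun 𝒜 (algebraMap k R c) = 0 := by
      refine oFun_of_notMem 𝒜 ?_
      rw [hmbot]
      simpa using hne
    rw [h1, h2]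

/-! #### `oFun` and the trivial valuation -/

private def trivVal : R → EReal := fun f => if f = 0 then ⊤ else 0

private lemma trivVal_zero : trivVal (R := R) 0 = ⊤ := by
  simp [trivVal]

private lemma trivVal_ne {x : R} (hx : x ≠ 0) : trivVal x = (0 : EReal) := by
  simp only [trivVal]
  exact if_neg hx

private lemma trivVal_isSemival : IsSemival k (trivVal (R := R)) := by
  refine ⟨fun f => ?_, fun f g => ?_, fun f g => ?_, if_pos rfl, fun c hc => ?_⟩
  · by_cases hf : f = 0 <;> simp [trivVal, hf]
  · by_cases hf : f = 0
    · subst hf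
      by_cases hg : g = 0 <;>
        simp [trivVal, hg, EReal.top_add_of_ne_bot, EReal.top_add_top]
    · by_cases hg : g = 0
      · subst hg
        simp [trivVal, hf, EReal.add_top_of_ne_bot]
      · simp [trivVal, hf, hg, mul_ne_zero hf hg]
  · by_cases hfg : f + g = 0
    · simp [trivVal, hfg]
    · have : f ≠ 0 ∨ g ≠ 0 := by
        by_contra hcon
        push_neg at hcon
        exact hfg (by rw [hcon.1, hcon.2, add_zero])
      simp only [trivVal, if_neg hfg]
      rcases this with hf | hg
      · exact min_le_of_left_le (by simp [trivVal, hf])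
      · exact min_le_of_right_le (by simp [trivVal, hg])
  · have : algebraMap k R c ≠ 0 := fun h => hc ((algebraMap k R).injective (by rw [h, map_zero]))
    simp [trivVal, this]

private lemma trivVal_mem_XanP (hex : ∃ (α : Fin r → ℤ) (f : R), α ≠ 0 ∧ f ∈ 𝒜 α ∧ f ≠ 0) :
    trivVal (R := R) ∈ XanP 𝒜 := by
  show IsSemival k (trivVal (R := R)) ∧ trivVal (R := R) ≠ oFun 𝒜
  refine ⟨trivVal_isSemival, ?_⟩
  obtain ⟨α, f, hα, hf, hf0⟩ := hex
  intro h
  have h1 : trivVal f = (0 : EReal) := trivVal_ne hf0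
  have h2 : oFun 𝒜 f = ⊤ := oFun_of_mem 𝒜 (Ideal.subset_span ⟨α, hα, hf⟩)
  rw [h] at h1
  rw [h1] at h2
  exact EReal.zero_ne_top h2

private def trivX (hex : ∃ (α : Fin r → ℤ) (f : R), α ≠ 0 ∧ f ∈ 𝒜 α ∧ f ≠ 0) : ↥(XanP 𝒜) :=
  ⟨trivVal, trivVal_mem_XanP 𝒜 hex⟩

private lemma trivX_mem_link (hex : ∃ (α : Fin r → ℤ) (f : R), α ≠ 0 ∧ f ∈ 𝒜 α ∧ f ≠ 0) :
    trivX 𝒜 hex ∈ linkSet 𝒜 := by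
  constructor
  · intro f _ hf0
    have : (trivX 𝒜 hex).1 f = 0 := trivVal_ne hf0
    rw [this]
  · obtain ⟨α, f, hα, hf, hf0⟩ := id hex
    have hset : {x : EReal | ∃ f ∈ mIdeal 𝒜, f ≠ 0 ∧ x = (trivX 𝒜 hex).1 f} = {0} := by
      ext x
      constructor
      · rintro ⟨g, _, hg0, rfl⟩
        exact trivVal_ne hg0
      · rintro rfl
        exact ⟨f, Ideal.subset_span ⟨α, hα, hf⟩, hf0, (trivVal_ne hf0).symm⟩
    rw [hset, csInf_singleton]

/-! #### homogeneous generators of `mIdeal` -/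

private lemma exists_gens {ξ : Fin r → ℝ} (hξ : IsReeb 𝒜 ξ) :
    ∃ (m : ℕ) (g : Fin m → R) (β : Fin m → Fin r → ℤ),
      (∀ i, β i ≠ 0 ∧ g i ∈ 𝒜 (β i) ∧ g i ≠ 0) ∧ Ideal.span (Set.range g) = mIdeal 𝒜 := by
  haveI : IsNoetherianRing R := Algebra.FiniteType.isNoetherianRing k R
  obtain ⟨T, hT⟩ := (IsNoetherian.noetherian (mIdeal 𝒜) : (mIdeal 𝒜).FG)
  classical
  set s : Finset R :=
    T.biUnion (fun t => (DirectSum.decompose 𝒜 t).support.image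
      (fun γ => ((DirectSum.decompose 𝒜 t γ : 𝒜 γ) : R))) with hs
  have hmem : ∀ y ∈ s, ∃ γ : Fin r → ℤ, γ ≠ 0 ∧ y ∈ 𝒜 γ ∧ y ≠ 0 := by
    intro y hy
    rw [hs, Finset.mem_biUnion] at hy
    obtain ⟨t, ht, hy⟩ := hy
    rw [Finset.mem_image] at hy
    obtain ⟨γ, hγ, rfl⟩ := hy
    rw [DFinsupp.mem_support_iff] at hγ
    have hne : ((DirectSum.decompose 𝒜 t γ : 𝒜 γ) : R) ≠ 0 := fun h => hγ (by ext; exact h)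
    have htm : t ∈ mIdeal 𝒜 := by rw [← hT]; exact Ideal.subset_span ht
    refine ⟨γ, ?_, (DirectSum.decompose 𝒜 t γ).2, hne⟩
    rintro rfl
    exact hne (proj_zero_of_mem 𝒜 hξ htm 0 (le_of_eq (pairing_zero ξ)))
  have hspan : Ideal.span (↑s : Set R) = mIdeal 𝒜 := by
    refine le_antisymm (Ideal.span_le.2 ?_) ?_
    · intro y hy
      obtain ⟨γ, hγ, hyγ, _⟩ := hmem y hy
      exact Ideal.subset_span ⟨γ, hγ, hyγ⟩
    · rw [← hT]
      refine Ideal.span_le.2 ?_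
      intro t ht
      have hrep : t = ∑ i ∈ (DirectSum.decompose 𝒜 t).support,
          ((DirectSum.decompose 𝒜 t i : 𝒜 i) : R) := (DirectSum.sum_support_decompose 𝒜 t).symm
      rw [SetLike.mem_coe, hrep]
      refine Ideal.sum_mem _ fun i hi => ?_
      refine Ideal.subset_span ?_
      exact Finset.mem_coe.2 (Finset.mem_biUnion.2
        ⟨t, Finset.mem_coe.1 ht, Finset.mem_image.2 ⟨i, hi, rfl⟩⟩)
  refine ⟨s.card, fun i => (↑(s.equivFin.symm i) : R),
    fun i => (hmem _ (s.equivFin.symm i).2).choose, fun i => ?_, ?_⟩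
  · exact (hmem _ (s.equivFin.symm i).2).choose_spec
  · have hrange : Set.range (fun i => (↑(s.equivFin.symm i) : R)) = (↑s : Set R) := by
      ext y
      constructor
      · rintro ⟨i, rfl⟩
        exact (s.equivFin.symm i).2
      · intro hy
        exact ⟨s.equivFin ⟨y, hy⟩, by simp⟩
    rw [hrange, hspan]

/-! #### the kernel of a semivaluation in `XanP` does not contain all generators -/

private lemma exists_not_top (h0 : 𝒜 0 = Submodule.span k {(1 : R)}) {ξ : Fin r → ℝ}
    (hξ : IsReeb 𝒜 ξ) {w : R → EReal} (hw : IsSemival k w) (hw2 : w ≠ oFun 𝒜)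
    {N : ℕ} (f : Fin N → R)
    (hrad : (Ideal.span (Set.range f)).radical = mIdeal 𝒜) :
    ∃ j, w (f j) ≠ ⊤ := by
  by_contra hcon
  push_neg at hcon
  obtain ⟨hbot, hmul, hadd, hzero, halg⟩ := hw
  have hone : w 1 = 0 := by
    have := halg 1 one_ne_zero
    rwa [map_one] at this
  set K : Ideal R :=
    { carrier := {x | w x = ⊤}
      add_mem' := fun {a b} ha hb => by
        have h := hadd a b
        simp only [Set.mem_setOf_eq] at ha hb ⊢
        rw [ha, hb, min_self] at h
        exact top_le_iff.1 h
      zero_mem' := hzero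
      smul_mem' := fun c x hx => by
        simp only [Set.mem_setOf_eq, smul_eq_mul] at hx ⊢
        rw [hmul c x, hx, EReal.add_top_of_ne_bot (hbot c)] } with hK
  have hK1 : (1 : R) ∉ K := fun h => EReal.zero_ne_top (hone ▸ (h : w 1 = ⊤))
  have hKp : K.IsPrime := by
    constructor
    · intro htop
      exact hK1 (htop ▸ Submodule.mem_top)
    · intro x y hxy
      have hxy' : w x + w y = ⊤ := by rw [← hmul]; exact hxy
      by_contra hc
      push_neg at hc
      exact my_add_eq_top (hc.1 : ¬ (w x = ⊤)) (hc.2 : ¬ (w y = ⊤)) hxy'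
  have hsub : mIdeal 𝒜 ≤ K := by
    rw [← hrad]
    refine (hKp.isRadical.radical_le_iff).2 (Ideal.span_le.2 ?_)
    rintro y ⟨j, rfl⟩
    exact hcon j
  apply hw2
  funext x
  by_cases hx : x ∈ mIdeal 𝒜
  · rw [oFun_of_mem 𝒜 hx]
    exact hsub hx
  · rw [oFun_of_notMem 𝒜 hx]
    have hp0 : ((DirectSum.decompose 𝒜 x 0 : 𝒜 0) : R) ≠ 0 :=
      fun h => hx (mem_mIdeal_of_proj_zero 𝒜 h)
    have hm : ((DirectSum.decompose 𝒜 x 0 : 𝒜 0) : R) ∈ Submodule.span k {(1 : R)} := by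
      rw [← h0]
      exact (DirectSum.decompose 𝒜 x 0).2
    obtain ⟨c, hc⟩ := Submodule.mem_span_singleton.1 hm
    have hc0 : c ≠ 0 := by
      rintro rfl
      rw [zero_smul] at hc
      exact hp0 hc.symm
    set u : R := algebraMap k R c with hu
    have huc : u = ((DirectSum.decompose 𝒜 x 0 : 𝒜 0) : R) := by
      rw [hu, Algebra.algebraMap_eq_smul_one, hc]
    have hwu : w u = 0 := halg c hc0
    have hu0 : u ∈ 𝒜 0 := by
      rw [huc]
      exact (DirectSum.decompose 𝒜 x 0).2
    have hmm : x - u ∈ mIdeal 𝒜 := by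
      refine mem_mIdeal_of_proj_zero 𝒜 ?_
      rw [DirectSum.decompose_sub, DirectSum.sub_apply, AddSubgroupClass.coe_sub,
        DirectSum.decompose_of_mem_same 𝒜 hu0, huc, sub_self]
    have hwm : w (x - u) = ⊤ := hsub hmm
    have hwxne : w x ≠ ⊤ := by
      intro hwx
      have huK : u ∈ K := by
        have hux : u = x - (x - u) := by ring
        rw [hux]
        exact K.sub_mem (hwx : x ∈ K) (hwm : x - u ∈ K)
      exact EReal.zero_ne_top (hwu ▸ (huK : w u = ⊤))
    have hge : (0 : EReal) ≤ w x := by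
      have h := hadd u (x - u)
      have hsum : u + (x - u) = x := by ring
      rw [hsum] at h
      calc (0 : EReal) = min (w u) (w (x - u)) := by rw [hwu, hwm, min_eq_left le_top]
        _ ≤ w x := h
    have hle : w x ≤ 0 := by
      have hneg : w (-(x - u)) = ⊤ := by
        have hm1 : w (-1 : R) = 0 := by
          have := halg (-1) (neg_ne_zero.2 one_ne_zero)
          rwa [map_neg, map_one] at this
        have hxx : (-(x - u)) = (-1) * (x - u) := by ring
        rw [hxx, hmul, hm1, hwm, zero_add]
      have h := hadd x (-(x - u))
      have hxu : x + -(x - u) = u := by ring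
      rw [hxu, hwu, hneg, min_eq_left le_top] at h
      exact h
    exact le_antisymm hle hge

/-! #### part 2 : `Tfun ≤ sup` -/

private lemma part2 (h0 : 𝒜 0 = Submodule.span k {(1 : R)}) (ξ : Fin r → ℝ)
    (hξ : IsReeb 𝒜 ξ) (v : ↥(XanP 𝒜)) :
    Tfun 𝒜 v.1 ξ ≤ ⨆ φ ∈ {φ : ↥(XanP 𝒜) → EReal | IsPsh 𝒜 ξ φ},
      ((⨆ w ∈ linkSet 𝒜, φ w) - φ v) := by
  refine sSup_le ?_
  rintro x ⟨α, f, hα, hf, hf0, rfl⟩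
  have hex : ∃ (α : Fin r → ℤ) (f : R), α ≠ 0 ∧ f ∈ 𝒜 α ∧ f ≠ 0 := ⟨α, f, hα, hf, hf0⟩
  have hc : 0 < pairing ξ α := pairing_pos 𝒜 hξ hα hf hf0
  obtain ⟨m, g, β, hg, hspan⟩ := exists_gens 𝒜 hξ
  set F : Fin (m + 1) → R := Fin.cases f g with hFdef
  set A : Fin (m + 1) → (Fin r → ℤ) := Fin.cases α β with hAdef
  set lam : ℕ → Fin (m + 1) → ℝ := fun n => Fin.cases 0 (fun _ => -(n : ℝ)) with hlamdef
  have hF : ∀ j, A j ≠ 0 ∧ F j ∈ 𝒜 (A j) ∧ F j ≠ 0 := by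
    intro j
    induction j using Fin.cases with
    | zero => simpa [hFdef, hAdef] using ⟨hα, hf, hf0⟩
    | succ i => simpa [hFdef, hAdef] using hg i
  have hcs : ∀ j, 0 < pairing ξ (A j) :=
    fun j => pairing_pos 𝒜 hξ (hF j).1 (hF j).2.1 (hF j).2.2
  have hrangeF : Ideal.span (Set.range F) = mIdeal 𝒜 := by
    refine le_antisymm (Ideal.span_le.2 ?_) ?_
    · rintro y ⟨j, rfl⟩
      exact Ideal.subset_span ⟨A j, (hF j).1, (hF j).2.1⟩
    · rw [← hspan]
      refine Ideal.span_mono ?_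
      rintro y ⟨i, rfl⟩
      exact ⟨i.succ, by simp [hFdef]⟩
  have hradF : (Ideal.span (Set.range F)).radical = mIdeal 𝒜 := by
    rw [hrangeF, (mIdeal_isPrime 𝒜 hξ).radical]
  set G : ℕ → ↥(XanP 𝒜) → EReal :=
    fun n w => ⨆ j, fsTerm ξ (A j) (F j) (lam n j) w.1 with hGdef
  have hterm_ne_top : ∀ n (w : ↥(XanP 𝒜)) j, fsTerm ξ (A j) (F j) (lam n j) w.1 ≠ ⊤ := by
    intro n w j
    rw [fsTerm_eq]
    refine my_div_ne_top (hcs j) ?_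
    exact my_add_eq_top (fun h => w.2.1.1 (F j) (EReal.neg_eq_top_iff.1 h)) (EReal.coe_ne_top _)
  have hG_ne_top : ∀ n w, G n w ≠ ⊤ := fun n w => my_fin_iSup_ne_top (hterm_ne_top n w)
  have hG_ne_bot : ∀ n w, G n w ≠ ⊥ := by
    intro n w
    obtain ⟨j, hj⟩ := exists_not_top 𝒜 h0 hξ w.2.1 w.2.2 F hradF
    have hterm : fsTerm ξ (A j) (F j) (lam n j) w.1 ≠ ⊥ := by
      rw [fsTerm_eq]
      refine my_div_ne_bot (hcs j) ?_
      rw [ne_eq, EReal.add_eq_bot_iff]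
      push_neg
      exact ⟨fun h => hj (EReal.neg_eq_bot_iff.1 h), EReal.coe_ne_bot _⟩
    exact fun h =>
      hterm (le_bot_iff.1 (h ▸ le_iSup (fun j => fsTerm ξ (A j) (F j) (lam n j) w.1) j))
  set φre : ℕ → ↥(XanP 𝒜) → ℝ := fun n w => (G n w).toReal with hφredef
  have hφre : ∀ n w, ((φre n w : ℝ) : EReal) = G n w :=
    fun n w => EReal.coe_toReal (hG_ne_top n w) (hG_ne_bot n w)
  have Gcont : ∀ n, Continuous (G n) := by
    intro n
    refine my_cont_fin_iSup fun j => ?_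
    have h1 : Continuous fun w : ↥(XanP 𝒜) => w.1 (F j) :=
      (continuous_apply (F j)).comp continuous_subtype_val
    have h2 : Continuous fun w : ↥(XanP 𝒜) => -(w.1 (F j)) := continuous_neg.comp h1
    have h3 : Continuous fun w : ↥(XanP 𝒜) => -(w.1 (F j)) + ((lam n j : ℝ) : EReal) :=
      my_continuous_add_const h2 _
    have h4 := my_continuous_const_mul h3 (d := (pairing ξ (A j))⁻¹)
      (inv_ne_zero (ne_of_gt (hcs j)))
    simpa only [fsTerm] using h4
  set φC : ℕ → C(↥(XanP 𝒜), ℝ) := fun n => ⟨φre n, by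
    rw [continuous_iff_continuousAt]
    intro w
    exact (EReal.tendsto_toReal (hG_ne_top n w) (hG_ne_bot n w)).comp (Gcont n).continuousAt⟩
    with hφCdef
  have hFS : ∀ n, IsFS 𝒜 ξ ⇑(φC n) := fun n =>
    ⟨m + 1, F, A, lam n, hF, hradF, fun w => hφre n w⟩
  have hanti : ∀ n n', n ≤ n' → ∀ w, φre n' w ≤ φre n w := by
    intro n n' h w
    have hlam : ∀ j, lam n' j ≤ lam n j := by
      intro j
      induction j using Fin.cases with
      | zero => simp [hlamdef]
      | succ i => simpa [hlamdef] using neg_le_neg ((Nat.cast_le (α := ℝ)).2 h)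
    have hmono : G n' w ≤ G n w := by
      refine iSup_mono fun j => ?_
      rw [fsTerm_eq, fsTerm_eq]
      refine EReal.div_le_div_right_of_nonneg (by exact_mod_cast le_of_lt (hcs j)) ?_
      exact add_le_add le_rfl (by exact_mod_cast hlam j)
    exact EReal.toReal_le_toReal hmono (hG_ne_bot n' w) (hG_ne_top n w)
  set tX : ↥(XanP 𝒜) := trivX 𝒜 hex with htXdef
  have htriv : ∀ n, G n tX = 0 := by
    intro n
    refine le_antisymm (iSup_le fun j => ?_) ?_
    · rw [fsTerm_eq]
      refine EReal.div_nonpos_of_nonpos_of_nonneg ?_ (by exact_mod_cast le_of_lt (hcs j))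
      have htv : tX.1 (F j) = 0 := trivVal_ne (hF j).2.2
      rw [htv, neg_zero, zero_add]
      induction j using Fin.cases with
      | zero => simp [hlamdef]
      | succ i =>
          simp only [hlamdef, Fin.cases_succ]
          exact_mod_cast neg_nonpos.2 (Nat.cast_nonneg n)
    · have h00 : fsTerm ξ (A 0) (F 0) (lam n 0) tX.1 = 0 := by
        rw [fsTerm_eq]
        have htv : tX.1 (F 0) = 0 := trivVal_ne (hF 0).2.2
        rw [htv, neg_zero, zero_add]
        simp [hlamdef]
      calc (0 : EReal) = fsTerm ξ (A 0) (F 0) (lam n 0) tX.1 := h00.symm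
        _ ≤ G n tX := le_iSup (fun j => fsTerm ξ (A j) (F j) (lam n j) tX.1) 0
  set ψ : ↥(XanP 𝒜) → EReal := fun w => ⨅ n : ℕ, ((φre n w : ℝ) : EReal) with hψdef
  have hψt : ψ tX = 0 := by
    have hco : ∀ n : ℕ, ((φre n tX : ℝ) : EReal) = 0 := fun n => by rw [hφre n tX, htriv n]
    rw [hψdef]
    simp only [hco, iInf_const]
  have hψv_le : ψ v ≤ fsTerm ξ α f 0 v.1 := by
    have hGsplit : ∀ n, G n v =
        fsTerm ξ α f 0 v.1 ⊔ ⨆ i : Fin m, fsTerm ξ (β i) (g i) (-(n : ℝ)) v.1 := by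
      intro n
      refine Eq.trans (my_fin_iSup_succ (fun j => fsTerm ξ (A j) (F j) (lam n j) v.1)) ?_
      congr 1
    have hBbot : (⨅ n : ℕ, ⨆ i : Fin m, fsTerm ξ (β i) (g i) (-(n : ℝ)) v.1) = ⊥ := by
      rw [iInf_eq_bot]
      intro b hb
      obtain ⟨M, hM⟩ : ∃ M : ℝ, (M : EReal) < b := by
        induction b with
        | bot => exact absurd hb (lt_irrefl ⊥)
        | coe b => exact ⟨b - 1, by exact_mod_cast sub_one_lt b⟩
        | top => exact ⟨0, EReal.coe_lt_top 0⟩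
      obtain ⟨n, hn⟩ :=
        exists_nat_ge (∑ i : Fin m, |(-(v.1 (g i)).toReal) - M * pairing ξ (β i)|)
      refine ⟨n, lt_of_le_of_lt (iSup_le fun i => ?_) hM⟩
      rw [fsTerm_eq]
      have hcip : 0 < pairing ξ (β i) := pairing_pos 𝒜 hξ (hg i).1 (hg i).2.1 (hg i).2.2
      have hin : (-(v.1 (g i)).toReal) - M * pairing ξ (β i) ≤ (n : ℝ) := by
        refine le_trans (le_trans (le_abs_self _) ?_) hn
        exact Finset.single_le_sum
          (f := fun i => |(-(v.1 (g i)).toReal) - M * pairing ξ (β i)|)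
          (fun _ _ => abs_nonneg _) (Finset.mem_univ i)
      have hvb : v.1 (g i) ≠ ⊥ := v.2.1.1 (g i)
      set xv : EReal := v.1 (g i) with hxv
      clear_value xv
      induction xv with
      | bot => exact absurd rfl hvb
      | coe a =>
          rw [EReal.toReal_coe] at hin
          rw [show -((a : ℝ) : EReal) = ((-a : ℝ) : EReal) from rfl, ← EReal.coe_add,
            ← EReal.coe_div, EReal.coe_le_coe_iff, div_le_iff₀ hcip]
          nlinarith [hin, hcip]
      | top =>
          rw [EReal.neg_top, EReal.bot_add,
            EReal.bot_div_of_pos_ne_top (by exact_mod_cast hcip) (EReal.coe_ne_top _)]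
          exact bot_le
    calc ψ v = ⨅ n : ℕ, G n v := iInf_congr fun n => hφre n v
      _ = ⨅ n : ℕ, (fsTerm ξ α f 0 v.1 ⊔ ⨆ i : Fin m, fsTerm ξ (β i) (g i) (-(n : ℝ)) v.1) :=
          iInf_congr fun n => hGsplit n
      _ ≤ fsTerm ξ α f 0 v.1 ⊔ ⨅ n : ℕ, ⨆ i : Fin m, fsTerm ξ (β i) (g i) (-(n : ℝ)) v.1 :=
          my_iInf_sup_le _ _
      _ = fsTerm ξ α f 0 v.1 := by rw [hBbot, sup_bot_eq]
  have hψ : IsPsh 𝒜 ξ ψ := by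
    refine ⟨fun w => ?_, ⟨tX, by rw [hψt]; exact EReal.zero_ne_bot⟩, ℕ, (· ≤ ·), ⟨0⟩,
      fun i j => ⟨max i j, le_max_left i j, le_max_right i j⟩, φC,
      fun n => subset_closure (hFS n), fun i j hij w => hanti i j hij w, fun w => rfl⟩
    exact ne_of_lt (lt_of_le_of_lt (iInf_le _ 0) (EReal.coe_lt_top _))
  have hsup0 : (0 : EReal) ≤ ⨆ w ∈ linkSet 𝒜, ψ w := by
    refine le_trans (le_of_eq hψt.symm) ?_
    exact le_iSup₂ (f := fun w (_ : w ∈ linkSet 𝒜) => ψ w) tX (trivX_mem_link 𝒜 hex)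
  have hstep : (0 : EReal) - fsTerm ξ α f 0 v.1 ≤ (⨆ w ∈ linkSet 𝒜, ψ w) - ψ v :=
    EReal.sub_le_sub hsup0 hψv_le
  have hval : (((pairing ξ α)⁻¹ : ℝ) : EReal) * v.1 f = (0 : EReal) - fsTerm ξ α f 0 v.1 := by
    rw [fsTerm_eq, EReal.coe_zero, add_zero]
    have hnd : (-(v.1 f)) / ((pairing ξ α : ℝ) : EReal) =
        -((v.1 f) / ((pairing ξ α : ℝ) : EReal)) := EReal.neg_mul _ _
    rw [hnd, sub_eq_add_neg, zero_add, neg_neg, EReal.div_eq_inv_mul, ← EReal.coe_inv]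
  calc (((pairing ξ α)⁻¹ : ℝ) : EReal) * v.1 f
      = (0 : EReal) - fsTerm ξ α f 0 v.1 := hval
    _ ≤ (⨆ w ∈ linkSet 𝒜, ψ w) - ψ v := hstep
    _ ≤ ⨆ φ ∈ {φ : ↥(XanP 𝒜) → EReal | IsPsh 𝒜 ξ φ}, ((⨆ w ∈ linkSet 𝒜, φ w) - φ v) :=
        le_iSup₂ (f := fun φ (_ : φ ∈ {φ : ↥(XanP 𝒜) → EReal | IsPsh 𝒜 ξ φ}) =>
          ((⨆ w ∈ linkSet 𝒜, φ w) - φ v)) ψ hψ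

/-! #### part 1 : `sup ≤ Tfun` -/

private lemma part1 (h0 : 𝒜 0 = Submodule.span k {(1 : R)}) (ξ : Fin r → ℝ)
    (hξ : IsReeb 𝒜 ξ) (v : ↥(XanP 𝒜)) (hv : v ∈ linkSet 𝒜) :
    (⨆ φ ∈ {φ : ↥(XanP 𝒜) → EReal | IsPsh 𝒜 ξ φ}, ((⨆ w ∈ linkSet 𝒜, φ w) - φ v))
      ≤ Tfun 𝒜 v.1 ξ := by
  by_cases hTtop : Tfun 𝒜 v.1 ξ = ⊤
  · rw [hTtop]
    exact le_top
  have hT0 : (0 : EReal) ≤ Tfun 𝒜 v.1 ξ := by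
    obtain ⟨α, f, hα, hf, hf0⟩ := exists_homog 𝒜 h0 v
    refine le_sSup_of_le ⟨α, f, hα, hf, hf0, rfl⟩ ?_
    have h1 : (0 : EReal) ≤ v.1 f := hv.1 f (Ideal.subset_span ⟨α, hα, hf⟩) hf0
    have h2 : (0 : EReal) ≤ (((pairing ξ α)⁻¹ : ℝ) : EReal) := by
      exact_mod_cast le_of_lt (inv_pos.2 (pairing_pos 𝒜 hξ hα hf hf0))
    exact mul_nonneg h2 h1
  have hTbot : Tfun 𝒜 v.1 ξ ≠ ⊥ := by
    intro hbot
    rw [hbot] at hT0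
    exact (EReal.bot_lt_coe 0).not_ge hT0
  set t : ℝ := (Tfun 𝒜 v.1 ξ).toReal with ht
  have hTt : Tfun 𝒜 v.1 ξ = (t : EReal) := (EReal.coe_toReal hTtop hTbot).symm
  set S : Set C(↥(XanP 𝒜), ℝ) := {φ' | ∀ w ∈ linkSet 𝒜, φ' w ≤ φ' v + t} with hS
  have hSclosed : IsClosed S := by
    have hSeq : S = ⋂ w ∈ linkSet 𝒜, {φ' : C(↥(XanP 𝒜), ℝ) | φ' w ≤ φ' v + t} := by
      ext φ'
      simp [hS, Set.mem_iInter]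
    rw [hSeq]
    refine isClosed_biInter fun w _ => ?_
    exact isClosed_le (continuous_eval_const w)
      ((continuous_eval_const v).add continuous_const)
  have hFSsub : {φ' : C(↥(XanP 𝒜), ℝ) | IsFS 𝒜 ξ ⇑φ'} ⊆ S := by
    rintro φ' ⟨N, f, α, lam, hj, hrad, heval⟩
    rcases Nat.eq_zero_or_pos N with hN | hN
    · subst hN
      have h := heval v
      rw [iSup_of_empty] at h
      exact absurd h (EReal.coe_ne_bot _)
    haveI : Nonempty (Fin N) := ⟨⟨0, hN⟩⟩
    set c : Fin N → ℝ := fun j => pairing ξ (α j) with hc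
    have hcpos : ∀ j, 0 < c j := fun j => pairing_pos 𝒜 hξ (hj j).1 (hj j).2.1 (hj j).2.2
    have hmemT : ∀ j, (((c j)⁻¹ : ℝ) : EReal) * v.1 (f j) ≤ (t : EReal) := by
      intro j
      rw [← hTt]
      exact le_sSup ⟨α j, f j, (hj j).1, (hj j).2.1, (hj j).2.2, rfl⟩
    have hvne_top : ∀ j, v.1 (f j) ≠ ⊤ := by
      intro j htop
      have hmj := hmemT j
      rw [htop, EReal.coe_mul_top_of_pos (inv_pos.2 (hcpos j))] at hmj
      exact (EReal.coe_ne_top t) (top_le_iff.1 hmj)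
    have hvne_bot : ∀ j, v.1 (f j) ≠ ⊥ := fun j => v.2.1.1 (f j)
    set s : Fin N → ℝ := fun j => (v.1 (f j)).toReal with hsdef
    have hsv : ∀ j, v.1 (f j) = ((s j : ℝ) : EReal) :=
      fun j => (EReal.coe_toReal (hvne_top j) (hvne_bot j)).symm
    have hst : ∀ j, s j / c j ≤ t := by
      intro j
      have hmj := hmemT j
      rw [hsv j, ← EReal.coe_mul, EReal.coe_le_coe_iff] at hmj
      calc s j / c j = (c j)⁻¹ * s j := by rw [div_eq_inv_mul]
        _ ≤ t := hmj
    have hlow : ∀ j, lam j / c j - t ≤ φ' v := by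
      intro j
      have hterm : (((lam j / c j - t : ℝ)) : EReal) ≤ fsTerm ξ (α j) (f j) (lam j) v.1 := by
        rw [fsTerm_eq, hsv j, show -(((s j : ℝ)) : EReal) = ((-(s j) : ℝ) : EReal) from rfl,
          ← EReal.coe_add, ← EReal.coe_div, EReal.coe_le_coe_iff]
        have hexp : (-(s j) + lam j) / c j = lam j / c j - s j / c j := by ring
        rw [hexp]
        have := hst j
        linarith
      have hle : (((lam j / c j - t : ℝ)) : EReal) ≤ ((φ' v : ℝ) : EReal) := by
        rw [heval v]
        exact le_trans hterm (le_iSup (fun j => fsTerm ξ (α j) (f j) (lam j) v.1) j)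
      exact_mod_cast hle
    intro w hw
    set M : ℝ := Finset.univ.sup' Finset.univ_nonempty (fun j => lam j / c j) with hM
    have hup : φ' w ≤ M := by
      have hcoe : ((φ' w : ℝ) : EReal) ≤ (M : EReal) := by
        rw [heval w]
        refine iSup_le fun j => ?_
        rw [fsTerm_eq]
        have h2 : (0 : EReal) ≤ w.1 (f j) :=
          hw.1 (f j) (Ideal.subset_span ⟨α j, (hj j).1, (hj j).2.1⟩) (hj j).2.2
        have h1 : -(w.1 (f j)) ≤ 0 := by
          rw [← neg_zero]
          exact EReal.neg_le_neg_iff.2 h2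
        have h3 : -(w.1 (f j)) + ((lam j : ℝ) : EReal) ≤ ((lam j : ℝ) : EReal) := by
          calc -(w.1 (f j)) + ((lam j : ℝ) : EReal) ≤ 0 + ((lam j : ℝ) : EReal) :=
                add_le_add h1 le_rfl
            _ = ((lam j : ℝ) : EReal) := zero_add _
        refine le_trans
          (EReal.div_le_div_right_of_nonneg (by exact_mod_cast le_of_lt (hcpos j)) h3) ?_
        rw [← EReal.coe_div, EReal.coe_le_coe_iff]
        exact Finset.le_sup' (fun j => lam j / c j) (Finset.mem_univ j)
      exact_mod_cast hcoe
    have hMv : M ≤ φ' v + t := by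
      refine Finset.sup'_le _ _ fun j _ => ?_
      have := hlow j
      linarith
    exact le_trans hup hMv
  have hcpsh : ∀ φ' ∈ cpsh 𝒜 ξ, ∀ w ∈ linkSet 𝒜, (φ' : C(↥(XanP 𝒜), ℝ)) w ≤ φ' v + t :=
    fun φ' hφ' => closure_minimal hFSsub hSclosed hφ'
  refine iSup₂_le fun φ hφ => ?_
  obtain ⟨hφtop, hφbot, ι, le, hne, hdir, φi, hmem, hanti, hinf⟩ := hφ
  have hkey : ∀ w ∈ linkSet 𝒜, φ w ≤ φ v + (t : EReal) := by
    intro w hw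
    rw [← hinf w, ← hinf v]
    have h1 : ∀ i, ((φi i w : ℝ) : EReal) ≤ ((φi i v : ℝ) : EReal) + (t : EReal) := by
      intro i
      have h2 := hcpsh (φi i) (hmem i) w hw
      rw [← EReal.coe_add]
      exact_mod_cast h2
    calc (⨅ i, ((φi i w : ℝ) : EReal)) ≤ ⨅ i, (((φi i v : ℝ) : EReal) + (t : EReal)) :=
          le_iInf fun i => le_trans (iInf_le _ i) (h1 i)
      _ ≤ (⨅ i, ((φi i v : ℝ) : EReal)) + (t : EReal) := my_iInf_add_le _ t
  have hsup : (⨆ w ∈ linkSet 𝒜, φ w) ≤ φ v + (t : EReal) := iSup₂_le hkey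
  rw [hTt, EReal.sub_le_iff_le_add (Or.inr (EReal.coe_ne_top t)) (Or.inl (hφtop v))]
  exact le_trans hsup (le_of_eq (add_comm _ _))

end MainAux

end Aux

section Statements

variable {k : Type*} [Field k] [IsAlgClosed k] [CharZero k]
variable {R : Type*} [CommRing R] [IsDomain R] [IsIntegrallyClosed R] [Algebra k R]
  [Algebra.FiniteType k R]
variable {r : ℕ} (𝒜 : (Fin r → ℤ) → Submodule k R) [GradedAlgebra 𝒜]

theorem statement7 (h0 : 𝒜 0 = Submodule.span k {(1 : R)}) (ξ : Fin r → ℝ)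
    (hξ : IsReeb 𝒜 ξ) (v : ↥(XanP 𝒜)) (hv : v ∈ linkSet 𝒜) :
    Tfun 𝒜 v.1 ξ =
      ⨆ φ ∈ {φ : ↥(XanP 𝒜) → EReal | IsPsh 𝒜 ξ φ},
        ((⨆ w ∈ linkSet 𝒜, φ w) - φ v) := by
  exact le_antisymm (part2 𝒜 h0 ξ hξ v) (part1 𝒜 h0 ξ hξ v hv)

end Statements
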